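/- For L odd, the matrix U_G = (1/sqrt(L)) * Σ_{u,v} τ^{β^{-1}(α v^2 - 2uv + δ u^2)} |u><v|, where τ = -exp(iπ/L) and G = ((α,β),(γ,δ)) ∈ SL(2,Z_L) with β invertible mod L, is unitary. -/

import Mathlib

/-! Entry `(u, w)` of `U Uᴴ` is `1/L · ∑_v τ^(E_u(v) - E_w(v))`. The terms quadratic in `v`
cancel, so this is a sum over `v` of the additive character `x ↦ τ^x` of `ZMod L` (`τ` is a
primitive `L`-th root of unity since `L` is odd) at frequency `-2β⁻¹(u - w)`. As `2` and `β⁻¹`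
are units, the frequency vanishes only for `u = w`, and orthogonality of characters does the rest.
-/

open Matrix ComplexConjugate

open Complex in
theorem isPrimitiveRoot_neg_exp_pi_mul_I_div {n : ℕ} (hn : Odd n) :
    IsPrimitiveRoot (-exp (Real.pi * I / n)) n := by
  obtain ⟨k, rfl⟩ := hn
  -- `-exp (π i / n) = exp (π i (n + 1) / n)` and `(n + 1) / 2` is prime to `n`.
  have hcop : (k + 1).Coprime (2 * k + 1) := by
    rw [show 2 * k + 1 = k + (k + 1) by ring, Nat.coprime_add_self_right]
    simp
  convert isPrimitiveRoot_exp_of_coprime (k + 1) (2 * k + 1) (by omega) hcop using 1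
  have hn : ((2 * k + 1 : ℕ) : ℂ) ≠ 0 := Nat.cast_ne_zero.mpr (by omega)
  rw [← mul_neg_one, ← exp_pi_mul_I, ← exp_add]
  congr 1
  field_simp
  push_cast
  ring

def finEquivZMod (n : ℕ) [NeZero n] : Fin n ≃ ZMod n where
  toFun v := v.val
  invFun x := ⟨x.val, x.val_lt⟩
  left_inv v := Fin.ext (ZMod.val_cast_of_lt v.isLt)
  right_inv := ZMod.natCast_zmod_val

theorem Matrix.of_addChar_phase_mem_unitaryGroup {ι R : Type*} [Fintype ι] [DecidableEq ι]
    [CommRing R] [Fintype R] (e : ι ≃ R) {ψ : AddChar R ℂ} (hψ : ψ.IsPrimitive)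
    (f g : R → R) {b : R} (hb : IsUnit b) :
    (of fun u v => ((1 / √(Fintype.card R) : ℝ) : ℂ) * ψ (g (e u) + b * e u * e v + f (e v)))
      ∈ unitaryGroup ι ℂ := by
  set c : ℂ := ((1 / √(Fintype.card R) : ℝ) : ℂ)
  have hc : c * conj c * Fintype.card R = 1 := by
    have hcard : (0 : ℝ) < Fintype.card R := by exact_mod_cast Fintype.card_pos
    have : 1 / √(Fintype.card R) * (1 / √(Fintype.card R)) * Fintype.card R = (1 : ℝ) := by
      rw [div_mul_div_comm, Real.mul_self_sqrt hcard.le]; field_simp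
    simp only [c, Complex.conj_ofReal]
    exact_mod_cast this
  rw [mem_unitaryGroup_iff]
  ext u w
  have hphase : ∀ v, ψ (g (e u) + b * e u * e v + f (e v)) *
      conj (ψ (g (e w) + b * e w * e v + f (e v)))
      = ψ (g (e u) - g (e w)) * ψ (e v * (b * (e u - e w))) := by
    intro v
    rw [← AddChar.map_neg_eq_conj, ← AddChar.map_add_eq_mul, ← AddChar.map_add_eq_mul]
    ring_nf
  have hfreq : b * (e u - e w) = 0 ↔ u = w := by
    rw [hb.mul_right_eq_zero, sub_eq_zero, e.injective.eq_iff]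
  calc ∑ v, c * ψ (g (e u) + b * e u * e v + f (e v)) *
        conj (c * ψ (g (e w) + b * e w * e v + f (e v)))
      = c * conj c * ψ (g (e u) - g (e w)) * ∑ x, ψ (x * (b * (e u - e w))) := by
        rw [Finset.mul_sum, ← e.sum_comp]
        refine Finset.sum_congr rfl fun v _ => ?_
        rw [map_mul]
        linear_combination c * conj c * hphase v
    _ = (1 : Matrix ι ι ℂ) u w := by
        classical
        rw [AddChar.sum_mulShift _ hψ]
        split_ifs with h <;> rw [hfreq] at h
        · subst h; simp [hc, one_apply_eq]
        · simp [one_apply_ne h]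

theorem metaplectic_matrix_unitary_general (L : ℕ) [NeZero L] (hodd : Odd L)
    (α β δ βi : ZMod L) (hβ : β * βi = 1) :
    (fun u v : Fin L =>
        ((1 / Real.sqrt L : ℝ) : ℂ) *
          (-Complex.exp (Real.pi * Complex.I / L)) ^
            (βi * (α * (v.val : ZMod L) ^ 2 - 2 * (u.val : ZMod L) * (v.val : ZMod L)
              + δ * (u.val : ZMod L) ^ 2)).val
      : Matrix (Fin L) (Fin L) ℂ) ∈ Matrix.unitaryGroup (Fin L) ℂ := by
  have hτ := isPrimitiveRoot_neg_exp_pi_mul_I_div hodd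
  have hψ := AddChar.zmodChar_primitive_of_primitive_root L hτ
  have hb : IsUnit (-2 * βi) :=
    (ZMod.isUnit_iff_coprime 2 L |>.mpr hodd.coprime_two_left).neg.mul
      (IsUnit.of_mul_eq_one_right β hβ)
  have hU := Matrix.of_addChar_phase_mem_unitaryGroup (finEquivZMod L) hψ
    (fun x => βi * α * x ^ 2) (fun x => βi * δ * x ^ 2) hb
  rw [ZMod.card] at hU
  refine Eq.subst (motive := (· ∈ unitaryGroup (Fin L) ℂ)) ?_ hU
  ext u v
  rw [of_apply, AddChar.zmodChar_apply]
  congr 3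
  simp only [finEquivZMod, Equiv.coe_fn_mk]
  ring

/-- For L odd, the matrix U_G = (1/√L) Σ_{u,v} τ^{β⁻¹(αv² - 2uv + δu²)} |u⟩⟨v|,
with τ = -exp(iπ/L), G = ((α,β),(γ,δ)) ∈ SL(2,ℤ_L) and β invertible mod L
(with inverse βi), is unitary.  Exponents in ℤ_L are lifted to ℕ via `ZMod.val`. -/
theorem metaplectic_matrix_unitary (L : ℕ) [NeZero L] (hodd : Odd L)
    (α β γ δ βi : ZMod L) (hdet : α * δ - β * γ = 1) (hβ : β * βi = 1) :
    (fun u v : Fin L =>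
        ((1 / Real.sqrt L : ℝ) : ℂ) *
          (-Complex.exp (Real.pi * Complex.I / L)) ^
            (βi * (α * (v.val : ZMod L) ^ 2 - 2 * (u.val : ZMod L) * (v.val : ZMod L)
              + δ * (u.val : ZMod L) ^ 2)).val
      : Matrix (Fin L) (Fin L) ℂ) ∈ Matrix.unitaryGroup (Fin L) ℂ :=
  metaplectic_matrix_unitary_general L hodd α β δ βi hβ
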